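/- arXiv:0905.1678 — 2 statements merged into one kernel-verified Lean document; each statement's English description precedes it below -/
import Mathlib

section
/- For every real number p ≥ 2, every natural number l, and complex numbers a_1, ..., a_l, there exists a constant C_l depending only on l (and p) such that | |∑_{j=1}^l a_j|^p − ∑_{j=1}^l |a_j|^p | ≤ C_l ∑_{j≠k} |a_j| |a_k|^{p−1}. -/
/-!
Write `s k = ∑_{j<k} a j`. The quantity telescopes into
`∑_{k<l} (‖s k + a k‖^p - ‖s k‖^p - ‖a k‖^p)`. For two vectors with `‖y‖ ≤ ‖x‖`, convexity of
`t ↦ t^p` gives `|‖x + y‖^p - ‖x‖^p| ≤ p (2‖x‖)^(p-1) ‖y‖`, while `‖y‖^p ≤ ‖x‖ ‖y‖^(p-1)`.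
With `x = s k`, `y = a k`, the factor `‖s k‖` is split over the `a j` by the triangle inequality,
and `‖s k‖^(p-1) ≤ k^(p-2) ∑_{j<k} ‖a j‖^(p-1)` by the power mean inequality, which is where
`p ≥ 2` enters. The pairs `(j, k)` and `(k, j)` with `j < k < l` exhaust the off-diagonal.
-/

open Finset

namespace Real

lemma rpow_sub_rpow_le_mul_rpow_mul_sub {p x y : ℝ} (hp : 1 ≤ p) (hy : 0 ≤ y) (hyx : y ≤ x) :
    x ^ p - y ^ p ≤ p * x ^ (p - 1) * (x - y) := by
  rcases hyx.eq_or_lt with rfl | hlt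
  · simp
  have hslope := (convexOn_rpow hp).slope_le_of_hasDerivAt hy (hy.trans hlt.le) hlt
    (hasDerivAt_rpow_const (Or.inr hp))
  rwa [slope_def_field, div_le_iff₀ (sub_pos.2 hlt)] at hslope

lemma rpow_le_mul_rpow_sub_one {p b c : ℝ} (hp : 1 ≤ p) (hc : 0 ≤ c) (hcb : c ≤ b) :
    c ^ p ≤ b * c ^ (p - 1) := by
  rw [← sub_add_cancel p 1, rpow_add_one' hc (by linarith), add_sub_cancel_right, mul_comm]
  exact mul_le_mul_of_nonneg_right hcb (rpow_nonneg hc _)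

lemma abs_rpow_sub_rpow_sub_rpow_le {p b c X : ℝ} (hp : 1 ≤ p) (hc : 0 ≤ c) (hcb : c ≤ b)
    (hX : |X - b| ≤ c) :
    |X ^ p - b ^ p - c ^ p| ≤ p * 2 ^ (p - 1) * (b ^ (p - 1) * c) + b * c ^ (p - 1) := by
  obtain ⟨hXlo, hXhi⟩ := abs_sub_le_iff.1 hX
  have hb : 0 ≤ b := hc.trans hcb
  have hp₀ : 0 ≤ p := by linarith
  have hp₁ : 0 ≤ p - 1 := by linarith
  have hup : X ^ p - b ^ p ≤ p * 2 ^ (p - 1) * (b ^ (p - 1) * c) :=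
    calc X ^ p - b ^ p ≤ (b + c) ^ p - b ^ p := by
          gcongr <;> linarith
      _ ≤ p * (b + c) ^ (p - 1) * (b + c - b) :=
          rpow_sub_rpow_le_mul_rpow_mul_sub hp hb (by linarith)
      _ ≤ p * (2 * b) ^ (p - 1) * c := by
          rw [add_sub_cancel_left]
          gcongr
          linarith
      _ = p * 2 ^ (p - 1) * (b ^ (p - 1) * c) := by
          rw [mul_rpow zero_le_two hb]
          ring
  have hdown : b ^ p - X ^ p ≤ p * 2 ^ (p - 1) * (b ^ (p - 1) * c) :=
    calc b ^ p - X ^ p ≤ b ^ p - (b - c) ^ p := by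
          gcongr
          linarith
      _ ≤ p * b ^ (p - 1) * (b - (b - c)) :=
          rpow_sub_rpow_le_mul_rpow_mul_sub hp (by linarith) (by linarith)
      _ ≤ p * 2 ^ (p - 1) * (b ^ (p - 1) * c) := by
          rw [sub_sub_cancel, mul_assoc, mul_assoc]
          exact mul_le_mul_of_nonneg_left
            (le_mul_of_one_le_left (by positivity) (one_le_rpow one_le_two hp₁)) hp₀
  have hcp := rpow_le_mul_rpow_sub_one hp hc hcb
  have hcp₀ : 0 ≤ c ^ p := rpow_nonneg hc p
  rw [abs_le]
  constructor <;> linarith [mul_nonneg hb (rpow_nonneg hc (p - 1))]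

end Real

lemma abs_norm_add_rpow_sub_le {E : Type*} [SeminormedAddCommGroup E] {p : ℝ} (hp : 1 ≤ p)
    (x y : E) :
    |‖x + y‖ ^ p - ‖x‖ ^ p - ‖y‖ ^ p| ≤
      (p * 2 ^ (p - 1) + 1) * (‖x‖ * ‖y‖ ^ (p - 1) + ‖x‖ ^ (p - 1) * ‖y‖) := by
  wlog hyx : ‖y‖ ≤ ‖x‖ generalizing x y
  · convert this y x (le_of_not_ge hyx) using 1
    · rw [add_comm y x, sub_right_comm]
    · ring
  have hsub : |‖x + y‖ - ‖x‖| ≤ ‖y‖ := by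
    simpa using abs_norm_sub_norm_le (x + y) x
  have hp₀ : 0 ≤ p := by linarith
  have hu : 0 ≤ p * 2 ^ (p - 1) * (‖x‖ * ‖y‖ ^ (p - 1)) := by positivity
  have hv : 0 ≤ ‖x‖ ^ (p - 1) * ‖y‖ := by positivity
  calc _ ≤ p * 2 ^ (p - 1) * (‖x‖ ^ (p - 1) * ‖y‖) + ‖x‖ * ‖y‖ ^ (p - 1) :=
        Real.abs_rpow_sub_rpow_sub_rpow_le hp (norm_nonneg y) hyx hsub
    _ ≤ _ := by linarith

lemma sum_offDiag_range {M : Type*} [AddCommMonoid M] (f : ℕ × ℕ → M) (n : ℕ) :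
    ∑ q ∈ (range n).offDiag, f q = ∑ k ∈ range n, ∑ j ∈ range k, (f (j, k) + f (k, j)) := by
  induction n with
  | zero => simp
  | succ n ih =>
    rw [range_add_one, offDiag_insert notMem_range_self, sum_union, sum_union, ih,
      sum_insert notMem_range_self, sum_add_distrib]
    · simp only [singleton_product, product_singleton, sum_map, Function.Embedding.coeFn_mk]
      abel
    all_goals
      simp only [disjoint_left, mem_union, mem_offDiag, mem_product, mem_singleton, mem_range]
      omega

section

variable {E : Type*} [SeminormedAddCommGroup E]

lemma norm_sum_rpow_le {ι : Type*} (s : Finset ι) (a : ι → E) {q : ℝ} (hq : 1 ≤ q) :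
    ‖∑ i ∈ s, a i‖ ^ q ≤ (#s : ℝ) ^ (q - 1) * ∑ i ∈ s, ‖a i‖ ^ q :=
  (Real.rpow_le_rpow (norm_nonneg _) (norm_sum_le s a) (by linarith)).trans
    (Real.rpow_sum_le_const_mul_sum_rpow_of_nonneg s hq fun i _ => norm_nonneg (a i))

lemma abs_norm_sum_add_rpow_sub_le {p : ℝ} (hp : 2 ≤ p) {k l : ℕ} (hkl : k ≤ l) (a : ℕ → E) :
    |‖∑ j ∈ range k, a j + a k‖ ^ p - ‖∑ j ∈ range k, a j‖ ^ p - ‖a k‖ ^ p| ≤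
      (p * 2 ^ (p - 1) + 1) * (1 + (l : ℝ) ^ (p - 2)) *
        ∑ j ∈ range k, (‖a j‖ * ‖a k‖ ^ (p - 1) + ‖a k‖ * ‖a j‖ ^ (p - 1)) := by
  set s := ∑ j ∈ range k, a j
  set U := ∑ j ∈ range k, ‖a j‖ * ‖a k‖ ^ (p - 1)
  set V := ∑ j ∈ range k, ‖a k‖ * ‖a j‖ ^ (p - 1)
  have hlpow : 0 ≤ (l : ℝ) ^ (p - 2) := by positivity
  have hU : 0 ≤ U := by positivity
  have hV : 0 ≤ V := by positivity
  have hsU : ‖s‖ * ‖a k‖ ^ (p - 1) ≤ U :=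
    (mul_le_mul_of_nonneg_right (norm_sum_le _ _) (by positivity)).trans_eq (sum_mul ..)
  have hsV : ‖s‖ ^ (p - 1) * ‖a k‖ ≤ (l : ℝ) ^ (p - 2) * V :=
    calc ‖s‖ ^ (p - 1) * ‖a k‖
        ≤ ((k : ℝ) ^ (p - 2) * ∑ j ∈ range k, ‖a j‖ ^ (p - 1)) * ‖a k‖ := by
          gcongr
          simpa [sub_sub, one_add_one_eq_two] using norm_sum_rpow_le (range k) a (q := p - 1)
            (by linarith)
      _ ≤ (l : ℝ) ^ (p - 2) * V := by
          rw [mul_assoc, sum_mul]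
          simp_rw [mul_comm _ ‖a k‖]
          gcongr
  calc _ ≤ (p * 2 ^ (p - 1) + 1) * (‖s‖ * ‖a k‖ ^ (p - 1) + ‖s‖ ^ (p - 1) * ‖a k‖) :=
        abs_norm_add_rpow_sub_le (by linarith) s (a k)
    _ ≤ (p * 2 ^ (p - 1) + 1) * ((1 + (l : ℝ) ^ (p - 2)) * (U + V)) := by
        gcongr
        linarith [mul_nonneg hlpow hU]
    _ = _ := by rw [sum_add_distrib]; ring

theorem abs_norm_sum_rpow_sub_sum_rpow_le {p : ℝ} (hp : 2 ≤ p) (l : ℕ) (a : ℕ → E) :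
    |‖∑ j ∈ range l, a j‖ ^ p - ∑ j ∈ range l, ‖a j‖ ^ p| ≤
      (p * 2 ^ (p - 1) + 1) * (1 + (l : ℝ) ^ (p - 2)) *
        ∑ q ∈ (range l).offDiag, ‖a q.1‖ * ‖a q.2‖ ^ (p - 1) := by
  have htelescope : ‖∑ j ∈ range l, a j‖ ^ p - ∑ j ∈ range l, ‖a j‖ ^ p =
      ∑ k ∈ range l, (‖∑ j ∈ range k, a j + a k‖ ^ p - ‖∑ j ∈ range k, a j‖ ^ p - ‖a k‖ ^ p) := by
    simp only [← sum_range_succ, sum_sub_distrib,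
      sum_range_sub fun k => ‖∑ j ∈ range k, a j‖ ^ p]
    simp [Real.zero_rpow (by linarith : p ≠ 0)]
  rw [htelescope, sum_offDiag_range, mul_sum]
  exact (abs_sum_le_sum_abs _ _).trans <| sum_le_sum fun k hk =>
    abs_norm_sum_add_rpow_sub_le hp (mem_range.1 hk).le a

end

/-- For every real `p ≥ 2` and every `l`, there is a constant `C` (depending only on
`l` and `p`) such that for all complex numbers `a 1, ..., a l`,
`| |∑ a_j|^p − ∑ |a_j|^p | ≤ C ∑_{j≠k} |a_j| |a_k|^{p−1}`. -/
theorem stmt0 (p : ℝ) (hp : 2 ≤ p) (l : ℕ) :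
    ∃ C : ℝ, ∀ a : ℕ → ℂ,
      |‖∑ j ∈ Finset.range l, a j‖ ^ p - ∑ j ∈ Finset.range l, ‖a j‖ ^ p| ≤
        C * ∑ q ∈ (Finset.range l ×ˢ Finset.range l).filter (fun q => q.1 ≠ q.2),
              ‖a q.1‖ * ‖a q.2‖ ^ (p - 1) := by
  have hoffDiag : (range l ×ˢ range l).filter (fun q => q.1 ≠ q.2) = (range l).offDiag := by
    ext q
    simp [mem_offDiag, and_assoc]
  rw [hoffDiag]
  exact ⟨_, abs_norm_sum_rpow_sub_sum_rpow_le hp l⟩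
end

section
/- Let d ≥ 3, p = 2d/(d−2), ε > 0, and let V, W : ℝ × ℝ^d → ℂ be continuous compactly supported functions. Suppose (ε_n^1), (ε_n^2) ⊂ ℝ^+ are sequences with ε_n^2/ε_n^1 → ∞ as n → ∞. Define V_n(t,x) = (ε_n^1)^{−(d−2)/2} V((t−t_n^1)/ε_n^1, (x−x_n^1)/ε_n^1) and W_n(t,x) = (ε_n^2)^{−(d−2)/2} W((t−t_n^2)/ε_n^2, (x−x_n^2)/ε_n^2) for arbitrary sequences (t_n^1,x_n^1), (t_n^2,x_n^2) in ℝ × ℝ^d. Then ∫∫ |V_n| |W_n|^{(d+4)/(d−2)} dx dt → 0 as n → ∞. -/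
/-!
Bound `|W_n|^q` by its supremum and integrate `|V_n|` exactly over space-time `ℝ × ℝ^d`:
`∫ |V_n| = (ε_n^1)^{(d+4)/2} ∫ |V|` and `sup |W_n|^q ≤ (ε_n^2)^{-(d+4)/2} (sup |W|)^q` with
`q = (d+4)/(d-2)`. The two powers are opposite because the rescaling is critical, so the cross
term is at most `C (ε_n^1/ε_n^2)^{(d+4)/2} → 0`.
-/

open MeasureTheory Filter Module

-- Instance search does not unfold `volume` on a product to `volume.prod volume`.
instance Prod.volume_isAddHaarMeasure {E F : Type*}
    [AddGroup E] [TopologicalSpace E] [IsTopologicalAddGroup E] [MeasureSpace E]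
    [BorelSpace E] [SecondCountableTopology E] [LocallyCompactSpace E] [T2Space E]
    [AddGroup F] [TopologicalSpace F] [IsTopologicalAddGroup F] [MeasureSpace F]
    [BorelSpace F] [SecondCountableTopology F] [LocallyCompactSpace F] [T2Space F]
    [(volume : Measure E).IsAddHaarMeasure] [(volume : Measure F).IsAddHaarMeasure] :
    (volume : Measure (E × F)).IsAddHaarMeasure :=
  inferInstanceAs ((volume : Measure E).prod (volume : Measure F)).IsAddHaarMeasure

section Rescale

variable {E F : Type*} [NormedAddCommGroup E] [NormedSpace ℝ E]
  [NormedAddCommGroup F] [NormedSpace ℝ F]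

noncomputable def rescale (a ε : ℝ) (z : E) (f : E → F) (x : E) : F :=
  ε ^ a • f (ε⁻¹ • (x - z))

lemma norm_rescale (a : ℝ) {ε : ℝ} (hε : 0 ≤ ε) (z : E) (f : E → F) (x : E) :
    ‖rescale a ε z f x‖ = ε ^ a * ‖f (ε⁻¹ • (x - z))‖ := by
  rw [rescale, norm_smul, Real.norm_of_nonneg (Real.rpow_nonneg hε a)]

lemma norm_rescale_le {a ε N : ℝ} (hε : 0 ≤ ε) (z : E) {f : E → F} (hf : ∀ y, ‖f y‖ ≤ N)
    (x : E) : ‖rescale a ε z f x‖ ≤ ε ^ a * N := by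
  rw [norm_rescale a hε]
  exact mul_le_mul_of_nonneg_left (hf _) (Real.rpow_nonneg hε a)

variable [MeasurableSpace E] [BorelSpace E] [FiniteDimensional ℝ E]
  (μ : Measure E) [μ.IsAddHaarMeasure]

lemma integrable_norm_rescale (a : ℝ) {ε : ℝ} (hε : 0 < ε) (z : E) {f : E → F}
    (hf : Integrable f μ) : Integrable (fun x => ‖rescale a ε z f x‖) μ := by
  simp_rw [norm_rescale a hε.le]
  exact ((hf.norm.comp_smul (inv_ne_zero hε.ne')).comp_sub_right z).const_mul _

lemma integral_norm_rescale (a : ℝ) {ε : ℝ} (hε : 0 < ε) (z : E) (f : E → F) :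
    ∫ x, ‖rescale a ε z f x‖ ∂μ = ε ^ (a + finrank ℝ E) * ∫ x, ‖f x‖ ∂μ := by
  simp_rw [norm_rescale a hε.le]
  rw [integral_const_mul, integral_sub_right_eq_self (fun x => ‖f (ε⁻¹ • x)‖) z,
    Measure.integral_comp_inv_smul_of_nonneg μ (fun x => ‖f x‖) hε.le, smul_eq_mul,
    ← mul_assoc, Real.rpow_add hε, Real.rpow_natCast]

/-- With `a * q = -(a + dim E)` the bound is invariant under a common rescaling, so only the
ratio of the two scales survives. -/
lemma integral_norm_mul_norm_rpow_rescale_le {a q N ε₁ ε₂ : ℝ} (hq : 0 ≤ q)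
    (hcrit : a * q = -(a + finrank ℝ E)) (hε₁ : 0 < ε₁) (hε₂ : 0 < ε₂) (z₁ z₂ : E)
    {V W : E → F} (hV : Integrable V μ) (hW : ∀ y, ‖W y‖ ≤ N) :
    ∫ x, ‖rescale a ε₁ z₁ V x‖ * ‖rescale a ε₂ z₂ W x‖ ^ q ∂μ
      ≤ N ^ q * (∫ x, ‖V x‖ ∂μ) * (ε₁ / ε₂) ^ (a + finrank ℝ E) := by
  have hN : 0 ≤ N := (norm_nonneg _).trans (hW 0)
  have hWn : ∀ x, ‖rescale a ε₂ z₂ W x‖ ^ q ≤ ε₂ ^ (-(a + finrank ℝ E)) * N ^ q := fun x => by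
    calc ‖rescale a ε₂ z₂ W x‖ ^ q ≤ (ε₂ ^ a * N) ^ q :=
          Real.rpow_le_rpow (norm_nonneg _) (norm_rescale_le hε₂.le z₂ hW x) hq
      _ = ε₂ ^ (-(a + finrank ℝ E)) * N ^ q := by
          rw [Real.mul_rpow (Real.rpow_nonneg hε₂.le a) hN, ← Real.rpow_mul hε₂.le, hcrit]
  calc ∫ x, ‖rescale a ε₁ z₁ V x‖ * ‖rescale a ε₂ z₂ W x‖ ^ q ∂μ
      ≤ ∫ x, ‖rescale a ε₁ z₁ V x‖ * (ε₂ ^ (-(a + finrank ℝ E)) * N ^ q) ∂μ :=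
        integral_mono_of_nonneg (.of_forall fun x => by positivity)
          ((integrable_norm_rescale μ a hε₁ z₁ hV).mul_const _)
          (.of_forall fun x => mul_le_mul_of_nonneg_left (hWn x) (norm_nonneg _))
    _ = N ^ q * (∫ x, ‖V x‖ ∂μ) * (ε₁ / ε₂) ^ (a + finrank ℝ E) := by
        rw [integral_mul_const, integral_norm_rescale μ a hε₁, Real.div_rpow hε₁.le hε₂.le,
          Real.rpow_neg hε₂.le]
        ring

theorem tendsto_integral_norm_mul_norm_rpow_rescale {ι : Type*} {l : Filter ι} {a q N : ℝ}
    (hq : 0 ≤ q) (hcrit : a * q = -(a + finrank ℝ E)) (hweight : 0 < a + finrank ℝ E)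
    {ε₁ ε₂ : ι → ℝ} (hε₁ : ∀ n, 0 < ε₁ n) (hε₂ : ∀ n, 0 < ε₂ n)
    (hratio : Tendsto (fun n => ε₂ n / ε₁ n) l atTop) (z₁ z₂ : ι → E)
    {V W : E → F} (hV : Integrable V μ) (hW : ∀ y, ‖W y‖ ≤ N) :
    Tendsto (fun n => ∫ x, ‖rescale a (ε₁ n) (z₁ n) V x‖ *
      ‖rescale a (ε₂ n) (z₂ n) W x‖ ^ q ∂μ) l (nhds 0) := by
  have hratio' : Tendsto (fun n => ε₁ n / ε₂ n) l (nhds 0) := by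
    simpa only [Pi.inv_def, inv_div] using hratio.inv_tendsto_atTop
  have hbound : Tendsto (fun n => N ^ q * (∫ x, ‖V x‖ ∂μ) * (ε₁ n / ε₂ n) ^ (a + finrank ℝ E))
      l (nhds 0) := by
    simpa using (hratio'.rpow_const_nhds_zero hweight).const_mul (N ^ q * ∫ x, ‖V x‖ ∂μ)
  exact squeeze_zero (fun n => integral_nonneg fun x => by positivity)
    (fun n => integral_norm_mul_norm_rpow_rescale_le μ hq hcrit (hε₁ n) (hε₂ n) _ _ hV hW) hbound

end Rescale

lemma Prod.inv_smul_sub_mk {F : Type*} [AddCommGroup F] [Module ℝ F] (ε t : ℝ) (x : F) (p : ℝ × F) :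
    ε⁻¹ • (p - (t, x)) = ((p.1 - t) / ε, ε⁻¹ • (p.2 - x)) := by
  rw [div_eq_inv_mul]; rfl

/-- Scale-orthogonality case of the asymptotic decoupling: if `ε_n^2 / ε_n^1 → ∞`, then
for continuous compactly supported `V, W : ℝ × ℝ^d → ℂ`, the cross term
`∫∫ |V_n| |W_n|^{(d+4)/(d−2)} dx dt → 0`. -/
theorem stmt1 (d : ℕ) (hd : 3 ≤ d)
    (V W : ℝ × EuclideanSpace ℝ (Fin d) → ℂ)
    (hVc : Continuous V) (hVs : HasCompactSupport V)
    (hWc : Continuous W) (hWs : HasCompactSupport W)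
    (ε1 ε2 : ℕ → ℝ) (hε1 : ∀ n, 0 < ε1 n) (hε2 : ∀ n, 0 < ε2 n)
    (hdiv : Tendsto (fun n => ε2 n / ε1 n) atTop atTop)
    (t1 t2 : ℕ → ℝ) (x1 x2 : ℕ → EuclideanSpace ℝ (Fin d)) :
    Tendsto
      (fun n => ∫ p : ℝ × EuclideanSpace ℝ (Fin d),
        ‖(ε1 n ^ (-(((d : ℝ) - 2) / 2))) •
            V ((p.1 - t1 n) / ε1 n, (ε1 n)⁻¹ • (p.2 - x1 n))‖ *
        ‖(ε2 n ^ (-(((d : ℝ) - 2) / 2))) •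
            W ((p.1 - t2 n) / ε2 n, (ε2 n)⁻¹ • (p.2 - x2 n))‖ ^
          (((d : ℝ) + 4) / ((d : ℝ) - 2)))
      atTop (nhds 0) := by
  have hd2 : (0 : ℝ) < d - 2 := by
    have : (3 : ℝ) ≤ d := by exact_mod_cast hd
    linarith
  have hdim : finrank ℝ (ℝ × EuclideanSpace ℝ (Fin d)) = d + 1 := by
    simp [Module.finrank_prod, add_comm]
  obtain ⟨N, hN⟩ := hWs.exists_bound_of_continuous hWc
  have h := tendsto_integral_norm_mul_norm_rpow_rescale volume
    (a := -(((d : ℝ) - 2) / 2)) (q := ((d : ℝ) + 4) / ((d : ℝ) - 2))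
    (div_pos (by linarith) hd2).le (by rw [hdim]; push_cast; field_simp; ring)
    (by rw [hdim]; push_cast; linarith) hε1 hε2 hdiv (fun n => (t1 n, x1 n))
    (fun n => (t2 n, x2 n)) (hVc.integrable_of_hasCompactSupport hVs) hN
  simpa only [rescale, Prod.inv_smul_sub_mk] using h
end
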